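/- arXiv:math/0501183 — 5 statements merged into one kernel-verified Lean document; each statement's English description precedes it below -/
import Mathlib

section
/- Let S ⊆ (0,∞) be a closed subset of (0,∞) that is closed under addition and contains 1. Then either S = (0,∞) or there exists λ > 0 such that S ⊆ [λ,∞). -/
/-- A closed additive subsemigroup of `(0, ∞)` containing `1` is either all of
`(0, ∞)` or bounded away from `0`. -/
theorem stmt_5 (S : Set ℝ) (hSsub : S ⊆ Set.Ioi (0 : ℝ))
    (hSclosed : IsClosed {x : Set.Ioi (0 : ℝ) | (x : ℝ) ∈ S})
    (hSadd : ∀ s t : ℝ, s ∈ S → t ∈ S → s + t ∈ S)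
    (hS1 : (1 : ℝ) ∈ S) :
    S = Set.Ioi (0 : ℝ) ∨ ∃ lam : ℝ, 0 < lam ∧ S ⊆ Set.Ici lam := by
  by_cases h : ∃ lam : ℝ, 0 < lam ∧ S ⊆ Set.Ici lam
  · exact Or.inr h
  left
  push_neg at h
  have hsmall : ∀ ε : ℝ, 0 < ε → ∃ s ∈ S, s < ε := by
    intro ε hε
    obtain ⟨s, hs, hslt⟩ := Set.not_subset.mp (h ε hε)
    exact ⟨s, hs, lt_of_not_ge hslt⟩
  have hmul : ∀ (n : ℕ) (s : ℝ), s ∈ S → ((n + 1 : ℕ) : ℝ) * s ∈ S := by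
    intro n
    induction n with
    | zero => intro s hs; simpa using hs
    | succ k ih =>
      intro s hs
      have h1 := hSadd _ s (ih s hs) hs
      have h2 : ((k + 1 : ℕ) : ℝ) * s + s = ((k + 1 + 1 : ℕ) : ℝ) * s := by
        push_cast; ring
      rwa [h2] at h1
  have key : ∀ x : ℝ, 0 < x → ∀ ε : ℝ, 0 < ε → ∃ t ∈ S, x ≤ t ∧ t < x + ε := by
    intro x hx ε hε
    obtain ⟨s, hsS, hslt⟩ := hsmall ε hε
    have hs0 : 0 < s := hSsub hsS
    set n := ⌈x / s⌉₊ with hn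
    have hn1 : 1 ≤ n := Nat.one_le_ceil_iff.mpr (div_pos hx hs0)
    obtain ⟨m, hm⟩ := Nat.exists_eq_add_of_le hn1
    have htS : ((n : ℝ)) * s ∈ S := by
      have := hmul m s hsS
      rw [hm, add_comm 1 m]
      exact this
    refine ⟨(n : ℝ) * s, htS, ?_, ?_⟩
    · have : x / s ≤ (n : ℝ) := Nat.le_ceil _
      calc x = (x / s) * s := by field_simp
        _ ≤ (n : ℝ) * s := by nlinarith
    · have hlt : (n : ℝ) < x / s + 1 :=
        Nat.ceil_lt_add_one (le_of_lt (div_pos hx hs0))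
      have : (n : ℝ) * s < (x / s + 1) * s := by nlinarith
      calc (n : ℝ) * s < (x / s + 1) * s := this
        _ = x + s := by field_simp
        _ < x + ε := by linarith
  ext x
  simp only [Set.mem_Ioi]
  constructor
  · exact fun hx => hSsub hx
  intro hx
  have hseq : ∀ k : ℕ, ∃ t ∈ S, x ≤ t ∧ t < x + 1 / (k + 1) := by
    intro k
    exact key x hx (1 / (k + 1)) (by positivity)
  choose t htS htlo hthi using hseq
  have htend : Filter.Tendsto t Filter.atTop (nhds x) := by
    have h1 : Filter.Tendsto (fun k : ℕ => x + 1 / ((k : ℝ) + 1)) Filter.atTop (nhds (x + 0)) :=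
      Filter.Tendsto.const_add x tendsto_one_div_add_atTop_nhds_zero_nat
    rw [add_zero] at h1
    exact tendsto_of_tendsto_of_tendsto_of_le_of_le tendsto_const_nhds h1
      (fun k => htlo k) (fun k => le_of_lt (hthi k))
  have hpos : ∀ k, 0 < t k := fun k => hSsub (htS k)
  set g : ℕ → Set.Ioi (0 : ℝ) := fun k => ⟨t k, hpos k⟩ with hg
  have hgtend : Filter.Tendsto g Filter.atTop (nhds (⟨x, hx⟩ : Set.Ioi (0 : ℝ))) := by
    rw [hg]
    exact tendsto_subtype_rng.mpr htend
  have := hSclosed.mem_of_tendsto hgtend (Filter.Eventually.of_forall (fun k => htS k))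
  exact this
end

section
/- Let S ⊆ (0,∞) be a closed subset of (0,∞) that is closed under addition and contains 1. If the interior of S is non-empty, then there exists λ with 0 < λ < ∞ such that [λ,∞) ⊆ S. -/
/-- A closed additive subsemigroup of `(0, ∞)` containing `1` with non-empty
interior contains a half-line `[λ, ∞)`. -/
theorem stmt_6 (S : Set ℝ) (hSsub : S ⊆ Set.Ioi (0 : ℝ))
    (hSclosed : IsClosed {x : Set.Ioi (0 : ℝ) | (x : ℝ) ∈ S})
    (hSadd : ∀ s t : ℝ, s ∈ S → t ∈ S → s + t ∈ S)
    (hS1 : (1 : ℝ) ∈ S)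
    (hint : (interior S).Nonempty) :
    ∃ lam : ℝ, 0 < lam ∧ Set.Ici lam ⊆ S := by
  -- extract an interval (a, b) ⊆ S with 0 < a < b
  obtain ⟨x, hx⟩ := hint
  have hxS : x ∈ S := interior_subset hx
  have hx0 : 0 < x := hSsub hxS
  obtain ⟨ε, hε, hball⟩ := Metric.isOpen_iff.1 isOpen_interior x hx
  set δ : ℝ := min ε (x / 2) with hδdef
  have hδ0 : 0 < δ := lt_min hε (by linarith)
  set a : ℝ := x - δ with ha
  set b : ℝ := x + δ with hb
  have ha0 : 0 < a := by
    have : δ ≤ x / 2 := min_le_right _ _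
    simp only [ha]; linarith
  have hab : a < b := by simp only [ha, hb]; linarith
  have hIoo : Set.Ioo a b ⊆ S := by
    intro y hy
    apply interior_subset
    apply hball
    rw [Real.ball_eq_Ioo]
    have hδε : δ ≤ ε := min_le_left _ _
    constructor
    · have := hy.1; simp only [ha] at this; linarith
    · have := hy.2; simp only [hb] at this; linarith
  -- key: (n+1)·(a,b) ⊆ S
  have key : ∀ n : ℕ, ∀ y : ℝ, (n + 1 : ℝ) * a < y → y < (n + 1 : ℝ) * b → y ∈ S := by
    intro n
    induction n with
    | zero =>
      intro y h1 h2
      push_cast at h1 h2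
      exact hIoo ⟨by linarith, by linarith⟩
    | succ n ih =>
      intro y h1 h2
      push_cast at h1 h2
      have hn2 : (0:ℝ) < (n : ℝ) + 2 := by positivity
      set z : ℝ := y / ((n : ℝ) + 2) with hz
      have hz1 : a < z := by rw [hz, lt_div_iff₀ hn2]; linarith
      have hz2 : z < b := by rw [hz, div_lt_iff₀ hn2]; linarith
      have hy' : y - z ∈ S := by
        apply ih
        · push_cast
          have : y - z = ((n:ℝ) + 1) * z := by
            rw [hz]; field_simp; ring
          rw [this]
          have : (0:ℝ) < (n:ℝ) + 1 := by positivity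
          nlinarith
        · push_cast
          have : y - z = ((n:ℝ) + 1) * z := by
            rw [hz]; field_simp; ring
          rw [this]
          have : (0:ℝ) < (n:ℝ) + 1 := by positivity
          nlinarith
      have := hSadd (y - z) z hy' (hIoo ⟨hz1, hz2⟩)
      simpa using this
  -- choose N > a/(b-a), N ≥ 1, lam = N*b
  clear_value δ
  clear hδdef
  clear_value a b
  obtain ⟨N, hN1, hNgt⟩ : ∃ N : ℝ, 1 ≤ N ∧ a / (b - a) < N := by
    refine ⟨a / (b - a) + 1, ?_, by linarith⟩
    have : 0 < a / (b - a) := div_pos ha0 (by linarith)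
    linarith
  refine ⟨N * b, by nlinarith, ?_⟩
  intro y hy
  simp only [Set.mem_Ici] at hy
  have hb0 : 0 < b := by linarith
  have hyb : N ≤ y / b := (le_div_iff₀ hb0).2 hy
  have hyb0 : 0 ≤ y / b := le_trans (by linarith) hyb
  set n : ℕ := ⌊y / b⌋₊ with hn
  have h1 : (y : ℝ) / b < n + 1 := Nat.lt_floor_add_one _
  have h2 : (n : ℝ) ≤ y / b := Nat.floor_le hyb0
  -- need (n+1)*a < y < (n+1)*b
  have hlt2 : y < ((n : ℝ) + 1) * b := by
    rw [div_lt_iff₀ hb0] at h1; linarith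
  have hgap : y / b + 1 < y / a := by
    have h3 : y / a - y / b = y * (b - a) / (a * b) := by field_simp
    have h6 : a < N * (b - a) := (div_lt_iff₀ (by linarith)).1 hNgt
    have h5 : a * b < y * (b - a) := by nlinarith
    have h7 : 1 < y * (b - a) / (a * b) := (one_lt_div (by positivity)).2 h5
    linarith
  have hlt1 : ((n : ℝ) + 1) * a < y := by
    have : (n : ℝ) + 1 < y / a := by linarith
    rw [lt_div_iff₀ ha0] at this; linarith
  exact key n y hlt1 hlt2
end

section
/- Let α ∈ (0,1) and let ν = (1+α)^{-1}(δ₀ + α δ₁), where δ₀ and δ₁ are the Dirac measures at 0 and 1. Then ν is admissible and Λ(ν) = ℕ \ {0}, i.e., for t > 0, the function exp(tψ) (ψ the second characteristic of ν) is the characteristic function of a probability measure if and only if t is a positive integer. -/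
open MeasureTheory

/-- The characteristic function of a measure `μ` on `ℝ`:
`μ̂ y = ∫ x, exp (i y x) ∂μ`. -/
noncomputable def charFunMeas (μ : Measure ℝ) (y : ℝ) : ℂ :=
  ∫ x, Complex.exp (Complex.I * (y * x)) ∂μ

/-- `Λ(μ)` for an admissible probability measure with second characteristic `ψ`. -/
def lambdaSet (ψ : ℝ → ℂ) : Set ℝ :=
  {t : ℝ | 0 < t ∧ ∃ ν' : Measure ℝ, IsProbabilityMeasure ν' ∧
    ∀ y : ℝ, charFunMeas ν' y = Complex.exp (t * ψ y)}

open Complex Finset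
open scoped NNReal ENNReal

/-! The characteristic function of `ν` is `(1 + α e^{iy}) / (1 + α)` with `|α e^{iy}| < 1`,
so by unique lifting through the covering `exp : ℂ → ℂ \ {0}` the second characteristic is
`ψ(y) = log (1 + α e^{iy}) - log (1 + α)`, and the binomial series gives
`exp (t ψ(y)) = (1 + α)^{-t} ∑ₙ (t choose n) αⁿ e^{iny}`.
For `t = n` this is the characteristic function of the `n`-th convolution power of `ν`.
Otherwise the coefficient of index `⌊t⌋ + 2` is negative. If `μ` had this characteristic
function, then `μ + N = P` by uniqueness of characteristic functions, where `P` and `N` are the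
measures on `ℕ` whose masses are the positive and negative parts of the coefficients; but `N` has
an atom where `P` has none. -/

theorem Complex.eq_of_exp_comp_eq {X : Type*} [TopologicalSpace X] [PreconnectedSpace X]
    {f g : X → ℂ} (hf : Continuous f) (hg : Continuous g) (h : ∀ x, exp (f x) = exp (g x))
    (x₀ : X) (h₀ : f x₀ = g x₀) : f = g :=
  isCoveringMap_exp.eq_of_comp_eq hf hg (funext fun x => Subtype.ext (h x)) x₀ h₀

theorem Complex.hasSum_choose_mul_pow {a z : ℂ} (hz : ‖z‖ < 1) :
    HasSum (fun n => Ring.choose a n * z ^ n) ((1 + z) ^ a) := by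
  have := (one_add_cpow_hasFPowerSeriesOnBall_zero (a := a)).hasSum (y := z)
    (by simpa [← ofReal_norm] using (ENNReal.ofReal_lt_one).2 hz)
  simpa [binomialSeries, FormalMultilinearSeries.coeff_ofScalars, mul_comm] using this

theorem Real.hasSum_choose_mul_pow {a x : ℝ} (hx : |x| < 1) :
    HasSum (fun n => Ring.choose a n * x ^ n) ((1 + x) ^ a) := by
  have := (one_add_rpow_hasFPowerSeriesOnBall_zero (a := a)).hasSum (y := x)
    (by simpa [← ofReal_norm] using (ENNReal.ofReal_lt_one).2 hx)
  simpa [binomialSeries, FormalMultilinearSeries.coeff_ofScalars, mul_comm] using this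

lemma descPochhammer_smeval_eq_prod {R : Type*} [CommRing R] (r : R) (n : ℕ) :
    (descPochhammer ℤ n).smeval r = ∏ j ∈ range n, (r - j) := by
  induction n with
  | zero => simp
  | succ n ih =>
    simp [descPochhammer_succ_right, Polynomial.smeval_mul, Polynomial.smeval_natCast, ih,
      prod_range_succ, Polynomial.smeval_X]

-- Exactly one factor of `t (t - 1) ⋯ (t - ⌊t⌋ - 1)` is negative.
lemma Ring.choose_floor_add_two_neg {t : ℝ} (ht : 0 < t) (htn : ∀ n : ℕ, t ≠ n) :
    Ring.choose t (⌊t⌋₊ + 2) < 0 := by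
  have hlt : (⌊t⌋₊ : ℝ) < t := (Nat.floor_le ht.le).lt_of_ne (htn _).symm
  have hfac : (0 : ℝ) < ((⌊t⌋₊ + 2).factorial : ℝ)⁻¹ := by positivity
  rw [Ring.choose_eq_smul, descPochhammer_smeval_eq_prod, smul_eq_mul, prod_range_succ]
  refine mul_neg_of_pos_of_neg hfac (mul_neg_of_pos_of_neg (prod_pos fun j hj => ?_) ?_)
  · have : (j : ℝ) ≤ ⌊t⌋₊ := by exact_mod_cast Nat.lt_succ_iff.1 (mem_range.1 hj)
    linarith
  · push_cast
    linarith [Nat.lt_floor_add_one t]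

section CharFun

variable {E : Type*} [NormedAddCommGroup E] [InnerProductSpace ℝ E] [MeasurableSpace E]

lemma charFun_smul_measure (c : ℝ≥0∞) (μ : Measure E) (t : E) :
    charFun (c • μ) t = c.toReal * charFun μ t := by
  simp only [charFun_apply, integral_smul_measure, real_smul]

lemma charFun_add_measure [OpensMeasurableSpace E] (μ ν : Measure E) [IsFiniteMeasure μ]
    [IsFiniteMeasure ν] (t : E) : charFun (μ + ν) t = charFun μ t + charFun ν t := by
  have hint (ρ : Measure E) [IsFiniteMeasure ρ] :
      Integrable (fun x => exp (inner ℝ x t * I)) ρ :=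
    .of_bound (by fun_prop) 1 (ae_of_all _ fun x => by simp [norm_exp])
  simp only [charFun_apply, integral_add_measure (hint μ) (hint ν)]

theorem exists_charFun_eq_pow [BorelSpace E] [SecondCountableTopology E] (μ : Measure E)
    [IsProbabilityMeasure μ] (n : ℕ) :
    ∃ μ' : Measure E, IsProbabilityMeasure μ' ∧ charFun μ' = charFun μ ^ n := by
  induction n with
  | zero => exact ⟨Measure.dirac 0, inferInstance, by ext; simp⟩
  | succ n ih =>
    obtain ⟨μ', _, h⟩ := ih
    exact ⟨μ' ∗ μ, inferInstance, by ext; simp [charFun_conv, h, pow_succ]⟩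

end CharFun

lemma charFunMeas_eq_charFun (μ : Measure ℝ) : charFunMeas μ = charFun μ := by
  ext y
  simp only [charFunMeas, charFun_apply_real, mul_comm I, mul_assoc]

noncomputable def sumDirac (w : ℕ → ℝ≥0) : Measure ℝ :=
  Measure.sum fun n => (w n : ℝ≥0∞) • Measure.dirac (n : ℝ)

lemma sumDirac_apply_natCast (w : ℕ → ℝ≥0) (m : ℕ) : sumDirac w {(m : ℝ)} = w m := by
  rw [sumDirac, Measure.sum_apply _ (measurableSet_singleton _), tsum_eq_single m]
  · simp
  · intro n hn
    simp [Nat.cast_inj, hn]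

lemma isFiniteMeasure_sumDirac {w : ℕ → ℝ≥0} (hw : Summable w) :
    IsFiniteMeasure (sumDirac w) := by
  constructor
  rw [sumDirac, Measure.sum_apply _ MeasurableSet.univ]
  simp [← ENNReal.coe_tsum hw]

lemma charFun_sumDirac (w : ℕ → ℝ≥0) (y : ℝ) :
    charFun (sumDirac w) y = ∑' n, (w n : ℂ) * exp (y * n * I) := by
  rw [sumDirac, charFun_apply_real, integral_sum_dirac (by simp)]
  simp

theorem nonneg_of_charFun_eq_tsum {μ : Measure ℝ} [IsFiniteMeasure μ] {c : ℕ → ℝ}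
    (hc : Summable c) (h : ∀ y, charFun μ y = ∑' n, (c n : ℂ) * exp (y * n * I)) (n : ℕ) :
    0 ≤ c n := by
  set P := sumDirac fun n => (c n).toNNReal
  set N := sumDirac fun n => (-c n).toNNReal
  have := isFiniteMeasure_sumDirac hc.toNNReal
  have := isFiniteMeasure_sumDirac hc.neg.toNNReal
  have hsum (a : ℕ → ℝ) (ha : Summable a) (y : ℝ) :
      Summable fun n => (a n : ℂ) * exp (y * n * I) :=
    .of_norm <| by simpa [norm_exp] using ha.abs
  have hPN : μ + N = P := by
    refine Measure.ext_of_charFun (funext fun y => ?_)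
    rw [charFun_add_measure, h, charFun_sumDirac, charFun_sumDirac, ← Summable.tsum_add
      (hsum c hc y) (hsum _ (NNReal.summable_coe.2 hc.neg.toNNReal) y)]
    congr 1 with m
    rw [← add_mul]
    congr 1
    norm_cast
    simp only [Real.coe_toNNReal']
    linarith [max_zero_sub_eq_self (c m)]
  by_contra hneg
  have hn := congrArg (· {(n : ℝ)}) hPN
  simp only [Measure.add_apply, P, N, sumDirac_apply_natCast,
    Real.toNNReal_of_nonpos (not_le.1 hneg).le] at hn
  have := Real.toNNReal_eq_zero.1 (ENNReal.coe_eq_zero.1 (add_eq_zero.1 hn).2)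
  linarith

noncomputable def twoPointMeasure (α : ℝ) : Measure ℝ :=
  (ENNReal.ofReal (1 + α))⁻¹ • (Measure.dirac 0 + ENNReal.ofReal α • Measure.dirac 1)

section TwoPoint

variable {α : ℝ}

lemma isProbabilityMeasure_twoPointMeasure (hα : 0 ≤ α) :
    IsProbabilityMeasure (twoPointMeasure α) := by
  constructor
  rw [twoPointMeasure, Measure.smul_apply, Measure.add_apply, Measure.smul_apply]
  simp only [measure_univ, smul_eq_mul, mul_one]
  rw [← ENNReal.ofReal_one, ← ENNReal.ofReal_add zero_le_one hα, ENNReal.ofReal_one]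
  exact ENNReal.inv_mul_cancel (by simp; linarith) ENNReal.ofReal_ne_top

lemma charFun_twoPointMeasure (hα : 0 ≤ α) (y : ℝ) :
    charFun (twoPointMeasure α) y = (1 + α * exp (y * I)) / (1 + α) := by
  have : IsFiniteMeasure (ENNReal.ofReal α • Measure.dirac (1 : ℝ)) := ⟨by simp⟩
  rw [twoPointMeasure, charFun_smul_measure, charFun_add_measure, charFun_smul_measure,
    charFun_dirac, charFun_dirac, ENNReal.toReal_inv, ENNReal.toReal_ofReal hα,
    ENNReal.toReal_ofReal (by linarith)]
  simp [div_eq_inv_mul]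

lemma one_add_mul_exp_mem_slitPlane (hα0 : 0 ≤ α) (hα1 : α < 1) (y : ℝ) :
    1 + α * exp (y * I) ∈ slitPlane :=
  mem_slitPlane_of_norm_lt_one (by simpa [norm_exp_ofReal_mul_I, abs_of_nonneg hα0])

lemma charFun_twoPointMeasure_ne_zero (hα0 : 0 ≤ α) (hα1 : α < 1) (y : ℝ) :
    charFun (twoPointMeasure α) y ≠ 0 := by
  rw [charFun_twoPointMeasure hα0]
  exact div_ne_zero (slitPlane_ne_zero (one_add_mul_exp_mem_slitPlane hα0 hα1 y))
    (by exact_mod_cast (by linarith : 1 + α ≠ 0))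

noncomputable def twoPointSecondChar (α y : ℝ) : ℂ :=
  log (1 + α * exp (y * I)) - log (1 + α)

theorem eq_twoPointSecondChar (hα0 : 0 ≤ α) (hα1 : α < 1) {ψ : ℝ → ℂ}
    (hψc : Continuous ψ) (hψ0 : ψ 0 = 0)
    (hψ : ∀ y, charFun (twoPointMeasure α) y = exp (ψ y)) :
    ψ = twoPointSecondChar α := by
  have hslit := one_add_mul_exp_mem_slitPlane hα0 hα1
  have h1α : (1 + α : ℂ) ≠ 0 := by exact_mod_cast (by linarith : 1 + α ≠ 0)
  refine eq_of_exp_comp_eq hψc ((Continuous.clog (by fun_prop) hslit).sub continuous_const)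
    (fun y => ?_) 0 (by simp [hψ0, twoPointSecondChar])
  rw [← hψ, charFun_twoPointMeasure hα0, twoPointSecondChar, exp_sub,
    exp_log (slitPlane_ne_zero (hslit y)), exp_log h1α]

theorem exp_mul_twoPointSecondChar (hα0 : 0 ≤ α) (hα1 : α < 1) (t y : ℝ) :
    exp (t * twoPointSecondChar α y) =
      ∑' n : ℕ, ((Ring.choose t n * α ^ n / (1 + α) ^ t : ℝ) : ℂ) * exp (y * n * I) := by
  have hz : ‖(α : ℂ) * exp (y * I)‖ < 1 := by
    simpa [norm_exp_ofReal_mul_I, abs_of_nonneg hα0]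
  have hne := slitPlane_ne_zero (mem_slitPlane_of_norm_lt_one hz)
  have h1α : (1 + α : ℂ) ≠ 0 := by exact_mod_cast (by linarith : 1 + α ≠ 0)
  rw [twoPointSecondChar, mul_sub, exp_sub, mul_comm (t : ℂ), mul_comm (t : ℂ),
    ← cpow_def_of_ne_zero hne, ← cpow_def_of_ne_zero h1α,
    ← (hasSum_choose_mul_pow hz).tsum_eq, ← tsum_div_const]
  congr 1 with n
  rw [ofReal_div, ofReal_cpow (by linarith), mul_pow, ← exp_nat_mul]
  push_cast [Complex.ofReal_choose]
  ring_nf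

end TwoPoint

/-- For `ν = (1+α)⁻¹ (δ₀ + α δ₁)` with `α ∈ (0,1)`, the measure `ν` is admissible
and minimally divisible: `Λ(ν) = ℕ \ {0}`. -/
theorem stmt_11 (α : ℝ) (hα : α ∈ Set.Ioo (0 : ℝ) 1)
    (ν : Measure ℝ)
    (hν : ν = (ENNReal.ofReal (1 + α))⁻¹ •
      (Measure.dirac (0 : ℝ) + ENNReal.ofReal α • Measure.dirac (1 : ℝ))) :
    (∀ y : ℝ, charFunMeas ν y ≠ 0) ∧
      ∀ ψ : ℝ → ℂ, Continuous ψ → ψ 0 = 0 →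
        (∀ y : ℝ, charFunMeas ν y = Complex.exp (ψ y)) →
        lambdaSet ψ = {t : ℝ | ∃ n : ℕ, 0 < n ∧ t = (n : ℝ)} := by
  obtain ⟨hα0, hα1⟩ := hα
  obtain rfl : ν = twoPointMeasure α := hν
  have := isProbabilityMeasure_twoPointMeasure hα0.le
  simp only [charFunMeas_eq_charFun]
  refine ⟨charFun_twoPointMeasure_ne_zero hα0.le hα1, fun ψ hψc hψ0 hψ =>
    Set.ext fun t => ⟨?_, ?_⟩⟩
  · rintro ⟨ht, ν', _, hν'⟩
    by_contra hnat
    have htn : ∀ n : ℕ, t ≠ n := fun n htn =>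
      hnat ⟨n, Nat.pos_of_ne_zero (by rintro rfl; exact ht.ne' (by exact_mod_cast htn)), htn⟩
    have hc : Summable fun n : ℕ => Ring.choose t n * α ^ n / (1 + α) ^ t :=
      (Real.hasSum_choose_mul_pow (abs_lt.2 ⟨by linarith, hα1⟩)).summable.div_const _
    have hneg : Ring.choose t (⌊t⌋₊ + 2) * α ^ (⌊t⌋₊ + 2) / (1 + α) ^ t < 0 :=
      div_neg_of_neg_of_pos (mul_neg_of_neg_of_pos (Ring.choose_floor_add_two_neg ht htn)
        (by positivity)) (by positivity)
    refine hneg.not_ge (nonneg_of_charFun_eq_tsum (μ := ν') hc (fun y => ?_) _)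
    rw [← charFunMeas_eq_charFun, hν', eq_twoPointSecondChar hα0.le hα1 hψc hψ0 hψ,
      exp_mul_twoPointSecondChar hα0.le hα1]
  · rintro ⟨n, hn, rfl⟩
    obtain ⟨μ, hμ, hpow⟩ := exists_charFun_eq_pow (twoPointMeasure α) n
    refine ⟨Nat.cast_pos.2 hn, μ, hμ, fun y => ?_⟩
    rw [charFunMeas_eq_charFun, hpow, Pi.pow_apply, hψ, ← exp_nat_mul]
    norm_cast
end

section
/- Let α ∈ (0,1) and t ≥ √α/(1-α). Then for every x ∈ ℝ the series Σ_{l=0}^∞ C(t,l) α^l · t/((x-l)² + t²) converges and its sum is non-negative, where C(t,l) = t(t-1)⋯(t-l+1)/l! is the generalized binomial coefficient. -/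
/-- The generalized binomial coefficient `C(t,l) = t(t-1)⋯(t-l+1)/l!`. -/
noncomputable def genBinom (t : ℝ) (l : ℕ) : ℝ :=
  (∏ i ∈ Finset.range l, (t - (i : ℝ))) / (l.factorial : ℝ)

lemma genBinom_succ (t : ℝ) (l : ℕ) :
    genBinom t (l + 1) = genBinom t l * ((t - l) / (l + 1)) := by
  rw [genBinom, genBinom, Finset.prod_range_succ, div_mul_div_comm]
  congr 1
  push_cast [Nat.factorial_succ]
  ring

lemma genBinom_nonneg (t : ℝ) (l : ℕ) (h : ∀ i : ℕ, i < l → (i : ℝ) ≤ t) :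
    0 ≤ genBinom t l := by
  apply div_nonneg _ (by positivity)
  apply Finset.prod_nonneg
  intro i hi
  have := h i (Finset.mem_range.mp hi)
  linarith

/-- For `α ∈ (0,1)` and `t ≥ √α/(1-α)`, the series
`Σ_l C(t,l) α^l · t/((x-l)² + t²)` converges and has non-negative sum for every
real `x`. -/
theorem stmt_15 (α : ℝ) (hα : α ∈ Set.Ioo (0 : ℝ) 1)
    (t : ℝ) (ht : Real.sqrt α / (1 - α) ≤ t) (x : ℝ) :
    Summable (fun l : ℕ => genBinom t l * α ^ l * (t / ((x - (l : ℝ)) ^ 2 + t ^ 2))) ∧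
      0 ≤ ∑' l : ℕ, genBinom t l * α ^ l * (t / ((x - (l : ℝ)) ^ 2 + t ^ 2)) := by
  obtain ⟨hα0, hα1⟩ := hα
  have h1α : (0:ℝ) < 1 - α := by linarith
  have htα : Real.sqrt α ≤ t * (1 - α) := by
    rw [div_le_iff₀ h1α] at ht; exact ht
  have ht0 : 0 < t := by
    have h0 : 0 < Real.sqrt α / (1 - α) := div_pos (Real.sqrt_pos.mpr hα0) h1α
    linarith
  have h1 : α ≤ t ^ 2 * (1 - α) ^ 2 := by
    nlinarith [Real.sq_sqrt hα0.le, Real.sqrt_nonneg α]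
  set f : ℕ → ℝ := fun l : ℕ => genBinom t l * α ^ l * (t / ((x - (l : ℝ)) ^ 2 + t ^ 2))
    with hf
  have hden : ∀ y : ℝ, 0 < y ^ 2 + t ^ 2 := fun y => by positivity
  have hkey : ∀ y : ℝ, α * (y ^ 2 + t ^ 2) ≤ (y - 1) ^ 2 + t ^ 2 := by
    intro y
    nlinarith [sq_nonneg ((1 - α) * y - 1), sq_nonneg y, sq_nonneg (y - 1)]
  -- norm of f
  have hnorm : ∀ l : ℕ, ‖f l‖ = |genBinom t l| * α ^ l * (t / ((x - (l : ℝ)) ^ 2 + t ^ 2)) := by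
    intro l
    rw [hf]
    rw [Real.norm_eq_abs, abs_mul, abs_mul, abs_of_nonneg (pow_nonneg hα0.le l),
      abs_of_nonneg (div_nonneg ht0.le (hden _).le)]
  -- Summability
  have hsum : Summable f := by
    apply summable_of_ratio_norm_eventually_le hα1
    filter_upwards [Filter.eventually_ge_atTop (⌈t⌉₊ + ⌈x⌉₊)] with l hl
    have hlt : t ≤ (l : ℝ) := le_trans (Nat.le_ceil t)
      (by exact_mod_cast le_trans (Nat.le_add_right _ _) hl)
    have hlx : x ≤ (l : ℝ) := le_trans (Nat.le_ceil x)
      (by exact_mod_cast le_trans (Nat.le_add_left _ _) hl)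
    have hA : 0 < (x - (l : ℝ)) ^ 2 + t ^ 2 := hden _
    have habs : |genBinom t (l + 1)| ≤ |genBinom t l| := by
      rw [genBinom_succ, abs_mul]
      have h2 : |(t - (l : ℝ)) / ((l : ℝ) + 1)| ≤ 1 := by
        rw [abs_div, abs_of_pos (by positivity : (0:ℝ) < (l:ℝ)+1), div_le_one (by positivity)]
        rw [abs_le]; constructor <;> linarith
      calc |genBinom t l| * |(t - (l : ℝ)) / ((l : ℝ) + 1)| ≤ |genBinom t l| * 1 :=
            mul_le_mul_of_nonneg_left h2 (abs_nonneg _)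
        _ = |genBinom t l| := mul_one _
    have hker : t / ((x - ((l : ℝ) + 1)) ^ 2 + t ^ 2) ≤ t / ((x - (l : ℝ)) ^ 2 + t ^ 2) := by
      apply div_le_div_of_nonneg_left ht0.le hA
      nlinarith
    calc ‖f (l + 1)‖ = |genBinom t (l + 1)| * α ^ (l + 1) * (t / ((x - ((l : ℝ) + 1)) ^ 2 + t ^ 2)) := by
          rw [hnorm (l + 1)]; push_cast; ring_nf
      _ ≤ |genBinom t l| * α ^ (l + 1) * (t / ((x - (l : ℝ)) ^ 2 + t ^ 2)) := by
          apply mul_le_mul (mul_le_mul_of_nonneg_right habs (by positivity)) hker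
            (by positivity) (by positivity)
      _ = α * ‖f l‖ := by rw [hnorm l]; ring
  refine ⟨hsum, ?_⟩
  set L : ℕ := ⌊t⌋₊ + 1 with hL
  have htL : t < (L : ℝ) := by
    rw [hL]; push_cast; exact Nat.lt_floor_add_one t
  have hLt : (⌊t⌋₊ : ℝ) ≤ t := Nat.floor_le ht0.le
  -- nonnegativity of genBinom for small indices
  have hgb : ∀ l : ℕ, l ≤ L → 0 ≤ genBinom t l := by
    intro l hl
    apply genBinom_nonneg
    intro i hi
    have : i ≤ ⌊t⌋₊ := by omega
    calc (i : ℝ) ≤ (⌊t⌋₊ : ℝ) := by exact_mod_cast this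
      _ ≤ t := hLt
  -- alternating signs beyond L
  have hsign : ∀ k : ℕ, 0 ≤ genBinom t (L + 2 * k) := by
    intro k
    induction k with
    | zero => simpa using hgb L le_rfl
    | succ k ih =>
        have e : L + 2 * (k + 1) = (L + 2 * k + 1) + 1 := by ring
        rw [e, genBinom_succ, genBinom_succ]
        have hneg1 : (t - (L + 2 * k : ℕ)) / ((L + 2 * k : ℕ) + 1) ≤ 0 := by
          apply div_nonpos_of_nonpos_of_nonneg _ (by positivity)
          have : (L : ℝ) ≤ ((L + 2 * k : ℕ) : ℝ) := by push_cast; linarith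
          linarith
        have hneg2 : (t - ((L + 2 * k + 1 : ℕ) : ℝ)) / (((L + 2 * k + 1 : ℕ) : ℝ) + 1) ≤ 0 := by
          apply div_nonpos_of_nonpos_of_nonneg _ (by positivity)
          have : (L : ℝ) ≤ ((L + 2 * k + 1 : ℕ) : ℝ) := by push_cast; linarith
          linarith
        have h4 : genBinom t (L + 2 * k) * ((t - ((L + 2 * k : ℕ) : ℝ)) / (((L + 2 * k : ℕ) : ℝ) + 1)) ≤ 0 :=
          mul_nonpos_of_nonneg_of_nonpos ih hneg1
        nlinarith [h4, hneg2]
  -- pair inequality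
  have hpair : ∀ l : ℕ, t ≤ (l : ℝ) → 0 ≤ genBinom t l → 0 ≤ f l + f (l + 1) := by
    intro l hlt hgbl
    have hA : 0 < (x - (l : ℝ)) ^ 2 + t ^ 2 := hden _
    have hB : 0 < (x - ((l : ℝ) + 1)) ^ 2 + t ^ 2 := hden _
    have hAB : α * ((x - (l : ℝ)) ^ 2 + t ^ 2) ≤ (x - ((l : ℝ) + 1)) ^ 2 + t ^ 2 := by
      have := hkey (x - (l : ℝ)); nlinarith
    have hinner : 0 ≤ t / ((x - (l : ℝ)) ^ 2 + t ^ 2)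
        + (t - (l : ℝ)) / ((l : ℝ) + 1) * α * (t / ((x - ((l : ℝ) + 1)) ^ 2 + t ^ 2)) := by
      have hl1 : (0:ℝ) < (l : ℝ) + 1 := by positivity
      have h3 : (t - (l : ℝ)) / ((l : ℝ) + 1) * α * (t / ((x - ((l : ℝ) + 1)) ^ 2 + t ^ 2))
          = -(((l : ℝ) - t) / ((l : ℝ) + 1) * (α * t / ((x - ((l : ℝ) + 1)) ^ 2 + t ^ 2))) := by
        ring
      rw [h3, ← sub_eq_add_neg, sub_nonneg]
      calc ((l : ℝ) - t) / ((l : ℝ) + 1) * (α * t / ((x - ((l : ℝ) + 1)) ^ 2 + t ^ 2))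
          ≤ 1 * (α * t / ((x - ((l : ℝ) + 1)) ^ 2 + t ^ 2)) := by
            apply mul_le_mul_of_nonneg_right _ (by positivity)
            rw [div_le_one hl1]; linarith
        _ = α * t / ((x - ((l : ℝ) + 1)) ^ 2 + t ^ 2) := one_mul _
        _ ≤ t / ((x - (l : ℝ)) ^ 2 + t ^ 2) := by
            rw [div_le_div_iff₀ hB hA]
            nlinarith [mul_le_mul_of_nonneg_left hAB ht0.le]
    have e : f l + f (l + 1) = genBinom t l * α ^ l *
        (t / ((x - (l : ℝ)) ^ 2 + t ^ 2)
          + (t - (l : ℝ)) / ((l : ℝ) + 1) * α * (t / ((x - ((l : ℝ) + 1)) ^ 2 + t ^ 2))) := by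
      simp only [hf, genBinom_succ]; push_cast; ring
    rw [e]
    exact mul_nonneg (mul_nonneg hgbl (by positivity)) hinner
  -- assemble
  have hsum2 : Summable (fun k : ℕ => f (k + L)) := (summable_nat_add_iff L).mpr hsum
  have he : Summable (fun k : ℕ => f (2 * k + L)) :=
    hsum2.comp_injective (fun a b hab => by omega)
  have ho : Summable (fun k : ℕ => f (2 * k + 1 + L)) :=
    hsum2.comp_injective (fun a b hab => by omega)
  calc (0:ℝ) ≤ (∑ l ∈ Finset.range L, f l) + ∑' k : ℕ, f (k + L) := by
        apply add_nonneg
        · apply Finset.sum_nonneg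
          intro l hl
          have hgbl := hgb l (le_of_lt (Finset.mem_range.mp hl))
          have h6 : (0:ℝ) ≤ t / ((x - (l : ℝ)) ^ 2 + t ^ 2) := by positivity
          exact mul_nonneg (mul_nonneg hgbl (by positivity)) h6
        · rw [← tsum_even_add_odd (f := fun k : ℕ => f (k + L)) he ho, ← Summable.tsum_add he ho]
          apply tsum_nonneg
          intro k
          have h5 := hpair (L + 2 * k) (by have := htL; push_cast at this ⊢; linarith) (hsign k)
          have e1 : 2 * k + L = L + 2 * k := by omega
          have e2 : 2 * k + 1 + L = L + 2 * k + 1 := by omega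
          rw [e1, e2]
          exact h5
    _ = ∑' l : ℕ, f l := Summable.sum_add_tsum_nat_add L hsum
end

section
/- Let α ∈ (0,1). Then there exists t > 0 such that Σ_{l=0}^∞ C(t,l) α^l · t/((2-l)² + t²) < 0, where C(t,l) = t(t-1)⋯(t-l+1)/l!. In fact, the limit superior as t → 0+ of (1+α)^{-t} π^{-1} Σ_{l=0}^∞ C(t,l) α^l · t/((2-l)² + t²) is at most -α²/(2π), so the sum is negative for all sufficiently small t > 0. -/
open Real Filter Topology

lemma genBinom_abs_le (t : ℝ) (ht0 : 0 ≤ t) (ht1 : t ≤ 1) (l : ℕ) :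
    |genBinom t l| ≤ 1 := by
  rw [genBinom, abs_div, abs_of_nonneg (by positivity : (0:ℝ) ≤ (l.factorial : ℝ)),
    div_le_one (by positivity), Finset.abs_prod]
  calc ∏ i ∈ Finset.range l, |t - (i : ℝ)|
      ≤ ∏ i ∈ Finset.range l, ((i : ℝ) + 1) := by
        apply Finset.prod_le_prod (fun i _ => abs_nonneg _)
        intro i _
        rw [abs_le]
        constructor <;> nlinarith [Nat.cast_nonneg (α := ℝ) i]
    _ = (l.factorial : ℝ) := by
        rw [← Nat.cast_one (R := ℝ)]
        push_cast [← Finset.prod_range_add_one_eq_factorial]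
        rfl

lemma key_tendsto (α : ℝ) (hα0 : 0 < α) (hα1 : α < 1) :
    Tendsto (fun t : ℝ => ∑' l : ℕ, genBinom t l * α ^ l * (t / ((2 - (l : ℝ)) ^ 2 + t ^ 2)))
      (nhdsWithin 0 (Set.Ioi 0)) (𝓝 (-α ^ 2 / 2)) := by
  have hlim : (∑' l : ℕ, (if l = 2 then -α ^ 2 / 2 else 0 : ℝ)) = -α ^ 2 / 2 :=
    tsum_ite_eq 2 _
  rw [← hlim]
  apply tendsto_tsum_of_dominated_convergence (bound := fun l => α ^ l)
    (summable_geometric_of_lt_one hα0.le hα1)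
  · intro l
    by_cases hl : l = 2
    · subst hl
      have hev : ∀ᶠ t : ℝ in nhdsWithin 0 (Set.Ioi 0),
          (t - 1) / 2 * α ^ 2 =
            genBinom t 2 * α ^ 2 * (t / ((2 - ((2 : ℕ) : ℝ)) ^ 2 + t ^ 2)) := by
        filter_upwards [self_mem_nhdsWithin] with t ht
        have ht0 : (0 : ℝ) < t := ht
        simp only [genBinom, Finset.prod_range_succ, Finset.prod_range_zero,
          Nat.cast_ofNat, Nat.factorial]
        push_cast
        field_simp
        ring
      have hcont : Tendsto (fun t : ℝ => (t - 1) / 2 * α ^ 2)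
          (nhdsWithin 0 (Set.Ioi 0)) (𝓝 (-α ^ 2 / 2)) := by
        have : ContinuousAt (fun t : ℝ => (t - 1) / 2 * α ^ 2) 0 := by fun_prop
        have h := this.tendsto.mono_left (nhdsWithin_le_nhds (s := Set.Ioi 0))
        norm_num at h
        convert h using 2
        ring
      simp only [if_pos]
      exact hcont.congr' hev
    · have hc : (0 : ℝ) < (2 - (l : ℝ)) ^ 2 := by
        rcases Nat.lt_or_ge l 2 with h | h
        · have : (l : ℝ) ≤ 1 := by exact_mod_cast Nat.lt_succ_iff.mp h
          nlinarith
        · have h3 : 3 ≤ l := by omega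
          have : (3 : ℝ) ≤ (l : ℝ) := by exact_mod_cast h3
          nlinarith
      have : ContinuousAt
          (fun t : ℝ => genBinom t l * α ^ l * (t / ((2 - (l : ℝ)) ^ 2 + t ^ 2))) 0 := by
        apply ContinuousAt.mul
        · apply ContinuousAt.mul
          · unfold genBinom
            fun_prop
          · fun_prop
        · exact ContinuousAt.div (by fun_prop) (by fun_prop) (by norm_num; nlinarith)
      have h := this.tendsto.mono_left (nhdsWithin_le_nhds (s := Set.Ioi 0))
      simp only [if_neg hl]
      convert h using 2
      simp
  · have hmem : Set.Ioo (0 : ℝ) (1 / 2) ∈ nhdsWithin (0 : ℝ) (Set.Ioi 0) :=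
      Ioo_mem_nhdsGT_of_mem ⟨le_refl 0, by norm_num⟩
    filter_upwards [hmem] with t ht l
    obtain ⟨ht0, ht2⟩ := ht
    have ht1 : t ≤ 1 := by linarith
    rw [Real.norm_eq_abs]
    by_cases hl : l = 2
    · subst hl
      have heq : genBinom t 2 * α ^ 2 * (t / ((2 - ((2 : ℕ) : ℝ)) ^ 2 + t ^ 2)) =
          (t - 1) / 2 * α ^ 2 := by
        simp only [genBinom, Finset.prod_range_succ, Finset.prod_range_zero,
          Nat.factorial]
        push_cast
        field_simp
        ring
      rw [heq, abs_mul, abs_of_nonneg (by positivity : (0:ℝ) ≤ α ^ 2)]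
      have : |(t - 1) / 2| ≤ 1 := by rw [abs_le]; constructor <;> nlinarith
      nlinarith [sq_nonneg α]
    · have hc : (1 : ℝ) ≤ (2 - (l : ℝ)) ^ 2 := by
        rcases Nat.lt_or_ge l 2 with h | h
        · have : (l : ℝ) ≤ 1 := by exact_mod_cast Nat.lt_succ_iff.mp h
          nlinarith
        · have h3 : 3 ≤ l := by omega
          have : (3 : ℝ) ≤ (l : ℝ) := by exact_mod_cast h3
          nlinarith
      have hq : t / ((2 - (l : ℝ)) ^ 2 + t ^ 2) ≤ 1 := by
        rw [div_le_one (by nlinarith)]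
        nlinarith
      have hq0 : 0 ≤ t / ((2 - (l : ℝ)) ^ 2 + t ^ 2) := by positivity
      calc |genBinom t l * α ^ l * (t / ((2 - (l : ℝ)) ^ 2 + t ^ 2))|
          = |genBinom t l| * α ^ l * (t / ((2 - (l : ℝ)) ^ 2 + t ^ 2)) := by
            rw [abs_mul, abs_mul, abs_of_nonneg (by positivity : (0:ℝ) ≤ α ^ l),
              abs_of_nonneg hq0]
        _ ≤ 1 * α ^ l * 1 := by
            apply mul_le_mul _ hq hq0 (by positivity)
            exact mul_le_mul (genBinom_abs_le t ht0.le ht1 l) le_rfl (by positivity)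
              zero_le_one
        _ = α ^ l := by ring


/-- For `α ∈ (0,1)` there exists `t > 0` with
`Σ_l C(t,l) α^l · t/((2-l)² + t²) < 0`; in fact the limsup as `t → 0+` of
`(1+α)^(-t) π⁻¹ Σ_l C(t,l) α^l · t/((2-l)² + t²)` is at most `-α²/(2π)`, so the
sum is negative for all sufficiently small `t > 0`. -/
theorem stmt_16 (α : ℝ) (hα : α ∈ Set.Ioo (0 : ℝ) 1) :
    (∃ t : ℝ, 0 < t ∧
      ∑' l : ℕ, genBinom t l * α ^ l * (t / ((2 - (l : ℝ)) ^ 2 + t ^ 2)) < 0) ∧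
    Filter.limsup
      (fun t : ℝ => (1 + α) ^ (-t) * π⁻¹ *
        ∑' l : ℕ, genBinom t l * α ^ l * (t / ((2 - (l : ℝ)) ^ 2 + t ^ 2)))
      (nhdsWithin 0 (Set.Ioi 0)) ≤ -α ^ 2 / (2 * π) ∧
    ∀ᶠ t : ℝ in nhdsWithin 0 (Set.Ioi 0),
      ∑' l : ℕ, genBinom t l * α ^ l * (t / ((2 - (l : ℝ)) ^ 2 + t ^ 2)) < 0 := by
  obtain ⟨hα0, hα1⟩ := hα
  have hS := key_tendsto α hα0 hα1
  have hneg : (-α ^ 2 / 2 : ℝ) < 0 := by nlinarith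
  have hev : ∀ᶠ t : ℝ in nhdsWithin 0 (Set.Ioi 0),
      ∑' l : ℕ, genBinom t l * α ^ l * (t / ((2 - (l : ℝ)) ^ 2 + t ^ 2)) < 0 :=
    hS.eventually_lt_const hneg
  refine ⟨?_, ?_, hev⟩
  · obtain ⟨t, ht1, ht2⟩ := (hev.and self_mem_nhdsWithin).exists
    exact ⟨t, ht2, ht1⟩
  · have h1α : (0 : ℝ) < 1 + α := by linarith
    have hrpow : Tendsto (fun t : ℝ => (1 + α) ^ (-t))
        (nhdsWithin 0 (Set.Ioi 0)) (𝓝 1) := by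
      have : ContinuousAt (fun t : ℝ => (1 + α) ^ (-t)) 0 := by
        exact (Real.continuousAt_const_rpow (by linarith : (1 + α) ≠ 0)).comp
          (continuousAt_id.neg)
      have h := this.tendsto.mono_left (nhdsWithin_le_nhds (s := Set.Ioi 0))
      simpa using h
    have hG : Tendsto
        (fun t : ℝ => (1 + α) ^ (-t) * π⁻¹ *
          ∑' l : ℕ, genBinom t l * α ^ l * (t / ((2 - (l : ℝ)) ^ 2 + t ^ 2)))
        (nhdsWithin 0 (Set.Ioi 0)) (𝓝 (-α ^ 2 / (2 * π))) := by
      have := (hrpow.mul_const π⁻¹).mul hS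
      convert this using 2
      have hπ : (π : ℝ) ≠ 0 := Real.pi_ne_zero
      field_simp
    exact le_of_eq hG.limsup_eq
end
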